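/- arXiv:1809.09422 — 8 statements merged into one kernel-verified Lean document; each statement's English description precedes it below -/
import Mathlib

section
/- Let Λ ≥ 1, let t ∈ {0,1,…,Λ}, and let L : {1,…,Λ} → ℕ be non-increasing (L_1 ≥ L_2 ≥ … ≥ L_Λ). For j ≥ 1 define R_j = |{λ ∈ {1,…,Λ} : L_λ ≥ j}|. Then Σ_{j=1}^{L_1} [ C(Λ, t+1) − C(Λ−R_j, t+1) ] = Σ_{r=1}^{Λ−t} L_r · C(Λ−r, t), where C(n,k) denotes the binomial coefficient (equal to 0 when k > n). -/
/-!
Pascal's rule telescopes `C(Λ, t+1) − C(Λ−R, t+1)` into `Σ_{r ≤ R} C(Λ−r, t)`. Because `L` is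
non-increasing, the caches served in round `j` are exactly the first `R_j` ones, so
`r ≤ R_j ↔ j ≤ L_r`; exchanging the sums over `j` and `r`, cache `r` contributes
`C(Λ−r, t)` once for each of its `L_r` users.
-/

open Finset

theorem Nat.choose_succ_sub_choose_succ_eq_sum_Icc (n t : ℕ) {R : ℕ} (hR : R ≤ n) :
    (n.choose (t + 1) : ℤ) - ((n - R).choose (t + 1) : ℤ) =
      ∑ r ∈ Icc 1 R, ((n - r).choose t : ℤ) := by
  induction R with
  | zero => simp
  | succ R ih =>
    rw [sum_Icc_succ_top (by omega), ← ih (by omega),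
      show n - R = (n - (R + 1)) + 1 by omega, Nat.choose_succ_succ]
    push_cast
    ring

section Antitone

variable {n : ℕ} {L : ℕ → ℕ}

theorem le_card_filter_le_iff (hL : AntitoneOn L (Set.Icc 1 n)) (j : ℕ) {r : ℕ}
    (hr : r ∈ Icc 1 n) : r ≤ #{l ∈ Icc 1 n | j ≤ L l} ↔ j ≤ L r := by
  rw [mem_Icc] at hr
  constructor
  · intro hcard
    by_contra! hLr
    have hsub : {l ∈ Icc 1 n | j ≤ L l} ⊆ Icc 1 (r - 1) := by
      intro l hl
      simp only [mem_filter, mem_Icc] at hl ⊢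
      by_contra! hrl
      have := hL ⟨hr.1, hr.2⟩ ⟨hl.1.1, hl.1.2⟩ (show r ≤ l by omega)
      omega
    have := card_le_card hsub
    simp only [Nat.card_Icc] at this
    omega
  · intro hjr
    have hsub : Icc 1 r ⊆ {l ∈ Icc 1 n | j ≤ L l} := by
      intro l hl
      simp only [mem_filter, mem_Icc] at hl ⊢
      exact ⟨⟨hl.1, by omega⟩, hjr.trans (hL ⟨hl.1, by omega⟩ ⟨hr.1, hr.2⟩ hl.2)⟩
    simpa using card_le_card hsub

theorem filter_le_eq_Icc_card (hL : AntitoneOn L (Set.Icc 1 n)) (j : ℕ) :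
    {l ∈ Icc 1 n | j ≤ L l} = Icc 1 #{l ∈ Icc 1 n | j ≤ L l} := by
  have hcard : #{l ∈ Icc 1 n | j ≤ L l} ≤ n :=
    (card_filter_le _ _).trans (by simp)
  ext r
  by_cases hr : r ∈ Icc 1 n
  · rw [mem_filter, mem_Icc (b := #_), le_card_filter_le_iff hL j hr]
    simp only [mem_Icc] at hr ⊢
    omega
  · simp only [mem_filter, mem_Icc] at hr ⊢
    omega

theorem choose_sub_choose_card_filter_eq_sum (hL : AntitoneOn L (Set.Icc 1 n)) (t j : ℕ) :
    (n.choose (t + 1) : ℤ) - ((n - #{l ∈ Icc 1 n | j ≤ L l}).choose (t + 1) : ℤ) =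
      ∑ r ∈ Icc 1 n, if j ≤ L r then ((n - r).choose t : ℤ) else 0 := by
  rw [Nat.choose_succ_sub_choose_succ_eq_sum_Icc n t ((card_filter_le _ _).trans (by simp)),
    ← filter_le_eq_Icc_card hL j, sum_filter]

end Antitone

theorem sum_Icc_ite_le_eq_mul {M a : ℕ} (ha : a ≤ M) (c : ℤ) :
    ∑ j ∈ Icc 1 M, (if j ≤ a then c else 0) = a * c := by
  rw [← sum_filter, show {j ∈ Icc 1 M | j ≤ a} = Icc 1 a by ext; simp; omega]
  simp

theorem sum_Icc_sub_mul_choose_eq (n t : ℕ) (f : ℕ → ℤ) :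
    ∑ r ∈ Icc 1 (n - t), f r * ((n - r).choose t : ℤ) =
      ∑ r ∈ Icc 1 n, f r * ((n - r).choose t : ℤ) := by
  refine sum_subset (Icc_subset_Icc_right (by omega)) fun r hr hr' => ?_
  simp only [mem_Icc] at hr hr'
  rw [Nat.choose_eq_zero_of_lt (by omega), Nat.cast_zero, mul_zero]

theorem total_delay_identity_general (Λ t : ℕ) (L : ℕ → ℕ)
    (hmono : ∀ a b, 1 ≤ a → a ≤ b → b ≤ Λ → L b ≤ L a)
    (R : ℕ → ℕ)
    (hR : ∀ j, R j = ((Finset.Icc 1 Λ).filter (fun l => j ≤ L l)).card) :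
    ∑ j ∈ Finset.Icc 1 (L 1),
        ((Nat.choose Λ (t + 1) : ℤ) - (Nat.choose (Λ - R j) (t + 1) : ℤ)) =
      ∑ r ∈ Finset.Icc 1 (Λ - t), (L r : ℤ) * (Nat.choose (Λ - r) t : ℤ) := by
  have hL : AntitoneOn L (Set.Icc 1 Λ) := fun a ha b hb hab => hmono a b ha.1 hab hb.2
  calc _ = ∑ j ∈ Icc 1 (L 1), ∑ r ∈ Icc 1 Λ,
          if j ≤ L r then ((Λ - r).choose t : ℤ) else 0 := by
        simp only [hR, choose_sub_choose_card_filter_eq_sum hL]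
    _ = ∑ r ∈ Icc 1 Λ, ∑ j ∈ Icc 1 (L 1),
          if j ≤ L r then ((Λ - r).choose t : ℤ) else 0 := sum_comm
    _ = ∑ r ∈ Icc 1 Λ, (L r : ℤ) * ((Λ - r).choose t : ℤ) := by
        refine sum_congr rfl fun r hr => sum_Icc_ite_le_eq_mul ?_ _
        simp only [mem_Icc] at hr
        exact hmono 1 r le_rfl hr.1 hr.2
    _ = _ := (sum_Icc_sub_mul_choose_eq Λ t _).symm

/-- Total delay identity: for a non-increasing profile `L` with round sizes
`R j = |{λ ∈ {1,…,Λ} : L λ ≥ j}|`,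
`Σ_{j=1}^{L 1} [C(Λ, t+1) − C(Λ−R_j, t+1)] = Σ_{r=1}^{Λ−t} L r · C(Λ−r, t)`. -/
theorem total_delay_identity (Λ t : ℕ) (hΛ : 1 ≤ Λ) (ht : t ≤ Λ) (L : ℕ → ℕ)
    (hmono : ∀ a b, 1 ≤ a → a ≤ b → b ≤ Λ → L b ≤ L a)
    (R : ℕ → ℕ)
    (hR : ∀ j, R j = ((Finset.Icc 1 Λ).filter (fun l => j ≤ L l)).card) :
    ∑ j ∈ Finset.Icc 1 (L 1),
        ((Nat.choose Λ (t + 1) : ℤ) - (Nat.choose (Λ - R j) (t + 1) : ℤ)) =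
      ∑ r ∈ Finset.Icc 1 (Λ - t), (L r : ℤ) * (Nat.choose (Λ - r) t : ℤ) :=
  total_delay_identity_general Λ t L hmono R hR
end

section
/- Let N ≥ K ≥ 1 and Λ ≥ 1 be natural numbers, let i ∈ {0,…,Λ−1}, and let L : {1,…,Λ} → ℕ satisfy 1 ≤ L_r ≤ K for every r ∈ {1,…,Λ−i}. Then, as an identity of rational numbers, [ C(N−1, K−1) · Σ_{r=1}^{Λ−i} P(Λ−i−1, r−1) · (Λ−r)! · L_r · P(K−1, L_r−1) · (K−L_r)! · (Λ−i) ] / ( P(N,K) · Λ! ) = Σ_{r=1}^{Λ−i} L_r · C(Λ−r, i) / ( N · C(Λ, i) ), where P(n,k) = n!/(n−k)! is the falling factorial (permutation coefficient) and C(n,k) is the binomial coefficient. -/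
/-!
After clearing denominators the two sums agree term by term. The file side of a summand
collapses because `P(K-1, L_r-1) (K-L_r)! = (K-1)!` no longer depends on `L_r`, and
`N C(N-1, K-1) (K-1)! = P(N, K)`; the cache side because `(Λ-i) P(Λ-i-1, r-1) = P(Λ-i, r)` and
`P(Λ-i, r) (Λ-r)! C(Λ, i) = C(Λ-r, i) Λ!`.
-/

open Finset

namespace Nat

theorem mul_descFactorial_pred {n k : ℕ} (hk : 0 < k) :
    n * (n - 1).descFactorial (k - 1) = n.descFactorial k := by
  obtain ⟨k, rfl⟩ := exists_eq_succ_of_ne_zero hk.ne'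
  cases n with
  | zero => simp
  | succ n => rw [Nat.add_sub_cancel, succ_sub_one, succ_descFactorial_succ]

theorem mul_choose_pred_mul_factorial_pred {n k : ℕ} (hk : 0 < k) :
    n * (n - 1).choose (k - 1) * (k - 1)! = n.descFactorial k := by
  rw [← mul_descFactorial_pred hk, descFactorial_eq_factorial_mul_choose]
  ring

theorem descFactorial_pred_mul_factorial_sub {k l : ℕ} (hl : 0 < l) (hlk : l ≤ k) :
    (k - 1).descFactorial (l - 1) * (k - l)! = (k - 1)! := by
  rw [← factorial_mul_descFactorial (show l - 1 ≤ k - 1 by omega),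
    show k - 1 - (l - 1) = k - l by omega, Nat.mul_comm]

theorem descFactorial_sub_mul_factorial_sub_mul_choose {n i r : ℕ} (h : i + r ≤ n) :
    (n - i).descFactorial r * (n - r)! * n.choose i = (n - r).choose i * n ! := by
  -- both sides times `i! (n-i-r)!` equal `(n-r)! n!`
  have hpos : 0 < i ! * (n - i - r)! := Nat.mul_pos (factorial_pos _) (factorial_pos _)
  apply Nat.eq_of_mul_eq_mul_right hpos
  have hdesc := factorial_mul_descFactorial (show r ≤ n - i by omega)
  have hchoose := choose_mul_factorial_mul_factorial (show i ≤ n by omega)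
  have hchoose' := choose_mul_factorial_mul_factorial (show i ≤ n - r by omega)
  rw [show n - r - i = n - i - r by omega] at hchoose'
  calc (n - i).descFactorial r * (n - r)! * n.choose i * (i ! * (n - i - r)!)
      = (n - r)! * (n.choose i * i ! * ((n - i - r)! * (n - i).descFactorial r)) := by ring
    _ = (n - r).choose i * n ! * (i ! * (n - i - r)!) := by
      rw [hdesc, hchoose, ← hchoose']; ring

end Nat

open Nat in
theorem Q_summand_cross_mul_eq {N K Λ i r l : ℕ} (hl : 0 < l) (hlK : l ≤ K) (hr : 0 < r)
    (hir : i + r ≤ Λ) :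
    (N - 1).choose (K - 1) *
        ((Λ - i - 1).descFactorial (r - 1) * (Λ - r)! * l * (K - 1).descFactorial (l - 1) *
          (K - l)! * (Λ - i)) * (N * Λ.choose i) =
      l * (Λ - r).choose i * (N.descFactorial K * Λ !) := by
  calc _ = l * ((Λ - i) * (Λ - i - 1).descFactorial (r - 1) * (Λ - r)! * Λ.choose i) *
        (N * (N - 1).choose (K - 1) * ((K - 1).descFactorial (l - 1) * (K - l)!)) := by ring
    _ = _ := by
      rw [mul_descFactorial_pred hr, descFactorial_sub_mul_factorial_sub_mul_choose hir,
        descFactorial_pred_mul_factorial_sub hl hlK,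
        mul_choose_pred_mul_factorial_pred (hl.trans_le hlK)]
      ring

theorem Q_i_identity_general (N K Λ : ℕ) (hK : 1 ≤ K) (hKN : K ≤ N)
    (i : ℕ) (hi : i + 1 ≤ Λ) (L : ℕ → ℕ)
    (hL : ∀ r ∈ Finset.Icc 1 (Λ - i), 1 ≤ L r ∧ L r ≤ K) :
    ((Nat.choose (N - 1) (K - 1) : ℚ) *
        ∑ r ∈ Finset.Icc 1 (Λ - i),
          (Nat.descFactorial (Λ - i - 1) (r - 1) : ℚ) *
            (Nat.factorial (Λ - r) : ℚ) * (L r : ℚ) *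
            (Nat.descFactorial (K - 1) (L r - 1) : ℚ) *
            (Nat.factorial (K - L r) : ℚ) * ((Λ - i : ℕ) : ℚ)) /
      ((Nat.descFactorial N K : ℚ) * (Nat.factorial Λ : ℚ)) =
    (∑ r ∈ Finset.Icc 1 (Λ - i), (L r : ℚ) * (Nat.choose (Λ - r) i : ℚ)) /
      ((N : ℚ) * (Nat.choose Λ i : ℚ)) := by
  have hN : N ≠ 0 := by omega
  have hP : N.descFactorial K ≠ 0 := (Nat.descFactorial_pos.mpr hKN).ne'
  have hC : Λ.choose i ≠ 0 := (Nat.choose_pos (by omega)).ne'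
  rw [div_eq_div_iff (by positivity) (by positivity), mul_sum, sum_mul, sum_mul]
  refine sum_congr rfl fun r hr => ?_
  obtain ⟨hr1, hr2⟩ := mem_Icc.mp hr
  obtain ⟨hl1, hl2⟩ := hL r hr
  exact_mod_cast Q_summand_cross_mul_eq (N := N) (Λ := Λ) (i := i) hl1 hl2 hr1 (by omega)

/-- The counting identity for `Q_i` in the converse:
`[C(N−1,K−1) · Σ_{r=1}^{Λ−i} P(Λ−i−1, r−1)·(Λ−r)!·L_r·P(K−1, L_r−1)·(K−L_r)!·(Λ−i)]
  / (P(N,K)·Λ!) = Σ_{r=1}^{Λ−i} L_r·C(Λ−r, i) / (N·C(Λ, i))`,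
where `P(n,k) = n!/(n−k)!` is the falling factorial (`Nat.descFactorial`). -/
theorem Q_i_identity (N K Λ : ℕ) (hK : 1 ≤ K) (hKN : K ≤ N) (hΛ : 1 ≤ Λ)
    (i : ℕ) (hi : i + 1 ≤ Λ) (L : ℕ → ℕ)
    (hL : ∀ r ∈ Finset.Icc 1 (Λ - i), 1 ≤ L r ∧ L r ≤ K) :
    ((Nat.choose (N - 1) (K - 1) : ℚ) *
        ∑ r ∈ Finset.Icc 1 (Λ - i),
          (Nat.descFactorial (Λ - i - 1) (r - 1) : ℚ) *
            (Nat.factorial (Λ - r) : ℚ) * (L r : ℚ) *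
            (Nat.descFactorial (K - 1) (L r - 1) : ℚ) *
            (Nat.factorial (K - L r) : ℚ) * ((Λ - i : ℕ) : ℚ)) /
      ((Nat.descFactorial N K : ℚ) * (Nat.factorial Λ : ℚ)) =
    (∑ r ∈ Finset.Icc 1 (Λ - i), (L r : ℚ) * (Nat.choose (Λ - r) i : ℚ)) /
      ((N : ℚ) * (Nat.choose Λ i : ℚ)) :=
  Q_i_identity_general N K Λ hK hKN i hi L hL
end

section
/- Let Λ ≥ 1 and let L : {1,…,Λ} → ℕ be non-increasing (L_1 ≥ L_2 ≥ … ≥ L_Λ). For i ∈ {0,1,…,Λ} define the rational number c_i = ( Σ_{r=1}^{Λ−i} L_r · C(Λ−r, i) ) / C(Λ, i), with the convention that the empty sum is 0 (so c_Λ = 0). Then the sequence (c_i)_{i=0}^{Λ} is non-increasing: c_{i+1} ≤ c_i for all i ∈ {0,…,Λ−1}. -/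
/-! Each summand of `c i` is `L r` times the ratio `C(Λ-r, i) / C(Λ, i)`, and this ratio is
non-increasing in `i` because `C(m, i+1) / C(m, i) = (m-i)/(i+1) ≤ (n-i)/(i+1) = C(n, i+1) / C(n, i)`
for `m ≤ n`. Passing from `i` to `i+1` also drops summands, all non-negative. -/

open Finset

theorem Nat.choose_succ_mul_choose_le_choose_mul_choose_succ {m n : ℕ} (hmn : m ≤ n) (i : ℕ) :
    m.choose (i + 1) * n.choose i ≤ m.choose i * n.choose (i + 1) := by
  refine Nat.le_of_mul_le_mul_right ?_ i.succ_pos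
  calc m.choose (i + 1) * n.choose i * (i + 1)
      = m.choose i * (m - i) * n.choose i := by rw [mul_right_comm, Nat.choose_succ_right_eq]
    _ ≤ m.choose i * (n - i) * n.choose i := by gcongr
    _ = m.choose i * n.choose (i + 1) * (i + 1) := by
      rw [mul_assoc (m.choose i) (n.choose (i + 1)), Nat.choose_succ_right_eq]; ring

theorem Nat.choose_succ_div_choose_succ_le {K : Type*} [Field K] [LinearOrder K]
    [IsStrictOrderedRing K] {m n i : ℕ} (hmn : m ≤ n) (hin : i < n) :
    (m.choose (i + 1) : K) / n.choose (i + 1) ≤ (m.choose i : K) / n.choose i := by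
  have hpos : (0 : K) < n.choose i := by exact_mod_cast Nat.choose_pos hin.le
  have hpos_succ : (0 : K) < n.choose (i + 1) := by exact_mod_cast Nat.choose_pos hin
  rw [div_le_div_iff₀ hpos_succ hpos]
  exact_mod_cast Nat.choose_succ_mul_choose_le_choose_mul_choose_succ hmn i

theorem c_i_nonincreasing_general (Λ : ℕ) (L : ℕ → ℕ)
    (c : ℕ → ℚ)
    (hc : ∀ i, c i =
      (∑ r ∈ Finset.Icc 1 (Λ - i), (L r : ℚ) * (Nat.choose (Λ - r) i : ℚ)) /
        (Nat.choose Λ i : ℚ)) :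
    ∀ i, i + 1 ≤ Λ → c (i + 1) ≤ c i := by
  intro i hi
  simp only [hc, sum_div, mul_div_assoc]
  calc ∑ r ∈ Icc 1 (Λ - (i + 1)), (L r : ℚ) * ((Λ - r).choose (i + 1) / Λ.choose (i + 1))
      ≤ ∑ r ∈ Icc 1 (Λ - (i + 1)), (L r : ℚ) * ((Λ - r).choose i / Λ.choose i) := by
        refine sum_le_sum fun r _ => mul_le_mul_of_nonneg_left ?_ (Nat.cast_nonneg _)
        exact Nat.choose_succ_div_choose_succ_le (Nat.sub_le Λ r) hi
    _ ≤ ∑ r ∈ Icc 1 (Λ - i), (L r : ℚ) * ((Λ - r).choose i / Λ.choose i) :=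
        sum_le_sum_of_subset_of_nonneg (Icc_subset_Icc_right (by omega))
          fun _ _ _ => by positivity

/-- Monotonicity of the converse coefficients: for a non-increasing profile `L`,
the sequence `c i = (Σ_{r=1}^{Λ−i} L r · C(Λ−r, i)) / C(Λ, i)` is non-increasing
on `{0,…,Λ}`. -/
theorem c_i_nonincreasing (Λ : ℕ) (hΛ : 1 ≤ Λ) (L : ℕ → ℕ)
    (hmono : ∀ a b, 1 ≤ a → a ≤ b → b ≤ Λ → L b ≤ L a)
    (c : ℕ → ℚ)
    (hc : ∀ i, c i =
      (∑ r ∈ Finset.Icc 1 (Λ - i), (L r : ℚ) * (Nat.choose (Λ - r) i : ℚ)) /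
        (Nat.choose Λ i : ℚ)) :
    ∀ i, i + 1 ≤ Λ → c (i + 1) ≤ c i :=
  c_i_nonincreasing_general Λ L c hc
end

section
/- Let Λ ≥ 1, let N > 0 be a real number, let t ∈ {0,…,Λ}, and let c : {0,…,Λ} → ℝ be a non-increasing sequence that is convex, i.e., c_{i+1} − c_i ≤ c_{i+2} − c_{i+1} for all i ∈ {0,…,Λ−2}. Suppose x_0, x_1, …, x_Λ are nonnegative real numbers with Σ_{i=0}^{Λ} x_i = N and Σ_{i=0}^{Λ} i·x_i ≤ t·N. Then Σ_{i=0}^{Λ} c_i · x_i ≥ N · c_t. -/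
/-!
A convex sequence lies above its supporting lines. At `t` take the line of slope
`s = c (t + 1) - c t`, or `s = 0` when `t = Λ`; since `c` is non-increasing, `s ≤ 0`.
Weighting `c i ≥ c t + s (i - t)` by `x i` and summing gives
`∑ c i x i ≥ N c t + s (∑ i x i - t N) ≥ N c t`, because `s ≤ 0` and the cache constraint
makes the bracket nonpositive.
-/

open Finset

lemma mul_le_sum_mul_of_supporting_line {ι : Type*} (S : Finset ι) (f g x : ι → ℝ)
    {a s t N : ℝ} (hs : s ≤ 0) (hline : ∀ i ∈ S, a + s * (f i - t) ≤ g i)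
    (hx : ∀ i ∈ S, 0 ≤ x i) (hsum : ∑ i ∈ S, x i = N)
    (hmean : ∑ i ∈ S, f i * x i ≤ t * N) :
    N * a ≤ ∑ i ∈ S, g i * x i := by
  have hexpand : ∑ i ∈ S, (a + s * (f i - t)) * x i
      = N * a + s * (∑ i ∈ S, f i * x i - t * N) := by
    rw [← hsum]
    simp only [mul_sum, sum_mul, ← sum_sub_distrib, ← sum_add_distrib]
    exact sum_congr rfl fun _ _ => by ring
  calc N * a ≤ N * a + s * (∑ i ∈ S, f i * x i - t * N) :=
        le_add_of_nonneg_right (mul_nonneg_of_nonpos_of_nonpos hs (by linarith))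
    _ = ∑ i ∈ S, (a + s * (f i - t)) * x i := hexpand.symm
    _ ≤ ∑ i ∈ S, g i * x i :=
        sum_le_sum fun i hi => mul_le_mul_of_nonneg_right (hline i hi) (hx i hi)

section SupportingLine

variable {c : ℕ → ℝ} {Λ : ℕ}

lemma monotoneOn_slope_of_convex
    (hconv : ∀ i, i + 2 ≤ Λ → c (i + 1) - c i ≤ c (i + 2) - c (i + 1)) :
    MonotoneOn (fun i => c (i + 1) - c i) (Set.Iio Λ) :=
  monotoneOn_of_le_succ Set.ordConnected_Iio fun a _ _ ha => by
    simp only [Order.succ_eq_add_one, Set.mem_Iio] at ha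
    exact hconv a (by omega)

lemma add_mul_sub_le_of_slope_bounds {s : ℝ} {t i : ℕ}
    (hleft : ∀ k < t, c (k + 1) - c k ≤ s)
    (hright : ∀ k, t ≤ k → k < Λ → s ≤ c (k + 1) - c k) (hi : i ≤ Λ) :
    c t + s * ((i : ℝ) - t) ≤ c i := by
  rcases le_total t i with hti | hit
  · have h := card_nsmul_le_sum (Ico t i) (fun k => c (k + 1) - c k) s fun k hk =>
      hright k (mem_Ico.1 hk).1 (by have := (mem_Ico.1 hk).2; omega)
    rw [sum_Ico_sub _ hti, Nat.card_Ico, nsmul_eq_mul, Nat.cast_sub hti] at h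
    linarith
  · have h := sum_le_card_nsmul (Ico i t) (fun k => c (k + 1) - c k) s fun k hk =>
      hleft k (mem_Ico.1 hk).2
    rw [sum_Ico_sub _ hit, Nat.card_Ico, nsmul_eq_mul, Nat.cast_sub hit] at h
    linarith

lemma exists_nonpos_supporting_line {t : ℕ} (ht : t ≤ Λ)
    (hmono : ∀ i, i + 1 ≤ Λ → c (i + 1) ≤ c i)
    (hconv : ∀ i, i + 2 ≤ Λ → c (i + 1) - c i ≤ c (i + 2) - c (i + 1)) :
    ∃ s ≤ 0, ∀ i ≤ Λ, c t + s * ((i : ℝ) - t) ≤ c i := by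
  have hslope := monotoneOn_slope_of_convex hconv
  rcases ht.lt_or_eq with ht | rfl
  · refine ⟨c (t + 1) - c t, by linarith [hmono t ht], fun i hi =>
      add_mul_sub_le_of_slope_bounds (fun k hk => ?_) (fun k htk hk => hslope ht hk htk) hi⟩
    exact hslope (Set.mem_Iio.2 (by omega)) (Set.mem_Iio.2 ht) hk.le
  · refine ⟨0, le_rfl, fun i hi =>
      add_mul_sub_le_of_slope_bounds (fun k hk => ?_) (fun k htk hk => by omega) hi⟩
    linarith [hmono k hk]

end SupportingLine

theorem jensen_step_general (Λ : ℕ) (N : ℝ)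
    (t : ℕ) (ht : t ≤ Λ) (c : ℕ → ℝ)
    (hmono : ∀ i, i + 1 ≤ Λ → c (i + 1) ≤ c i)
    (hconv : ∀ i, i + 2 ≤ Λ → c (i + 1) - c i ≤ c (i + 2) - c (i + 1))
    (x : ℕ → ℝ) (hx : ∀ i, i ≤ Λ → 0 ≤ x i)
    (hsum : ∑ i ∈ Finset.range (Λ + 1), x i = N)
    (hcache : ∑ i ∈ Finset.range (Λ + 1), (i : ℝ) * x i ≤ (t : ℝ) * N) :
    N * c t ≤ ∑ i ∈ Finset.range (Λ + 1), c i * x i := by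
  obtain ⟨s, hs, hline⟩ := exists_nonpos_supporting_line ht hmono hconv
  have hrange : ∀ i ∈ range (Λ + 1), i ≤ Λ := fun i hi => Nat.lt_succ_iff.1 (mem_range.1 hi)
  exact mul_le_sum_mul_of_supporting_line _ Nat.cast c x hs
    (fun i hi => hline i (hrange i hi)) (fun i hi => hx i (hrange i hi)) hsum hcache

/-- Jensen's-inequality optimization step: if `c : {0,…,Λ} → ℝ` is non-increasing
and convex, and `x_0,…,x_Λ ≥ 0` satisfy `Σ x_i = N` and `Σ i·x_i ≤ t·N`, then
`Σ c_i · x_i ≥ N · c_t`. -/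
theorem jensen_step (Λ : ℕ) (hΛ : 1 ≤ Λ) (N : ℝ) (hN : 0 < N)
    (t : ℕ) (ht : t ≤ Λ) (c : ℕ → ℝ)
    (hmono : ∀ i, i + 1 ≤ Λ → c (i + 1) ≤ c i)
    (hconv : ∀ i, i + 2 ≤ Λ → c (i + 1) - c i ≤ c (i + 2) - c (i + 1))
    (x : ℕ → ℝ) (hx : ∀ i, i ≤ Λ → 0 ≤ x i)
    (hsum : ∑ i ∈ Finset.range (Λ + 1), x i = N)
    (hcache : ∑ i ∈ Finset.range (Λ + 1), (i : ℝ) * x i ≤ (t : ℝ) * N) :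
    N * c t ≤ ∑ i ∈ Finset.range (Λ + 1), c i * x i :=
  jensen_step_general Λ N t ht c hmono hconv x hx hsum hcache
end

section
/- Let Λ ≥ 1, let K ≥ 1 and N ≥ 1 be natural numbers, let t ∈ {0,…,Λ}, and let L : {1,…,Λ} → ℕ be non-increasing with Σ_{r=1}^{Λ} L_r = K. For i ∈ {0,…,Λ} define c_i = ( Σ_{r=1}^{Λ−i} L_r · C(Λ−r, i) ) / C(Λ, i) (empty sum = 0). Then for all nonnegative real numbers x_0, …, x_Λ with Σ_{i=0}^{Λ} x_i = N and Σ_{i=0}^{Λ} i·x_i ≤ t·N, one has Σ_{i=0}^{Λ} (x_i/N) · c_i ≥ c_t = ( Σ_{r=1}^{Λ−t} L_r · C(Λ−r, t) ) / C(Λ, t). -/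
/-!
Since `C(Λ, i) C(Λ - i, r) = C(Λ, r) C(Λ - r, i)`, the coefficients are
`c i = ∑_{r=1}^{Λ} (L r / C(Λ, r)) C(Λ - i, r)`, a nonnegative combination of the sequences
`i ↦ C(Λ - i, r)`, each convex and nonincreasing by Pascal's rule. Hence `c` is convex and lies
above its tangent line at `t`, whose slope `c (t + 1) - c t` is `≤ 0`. Averaging against the
weights `x i / N`, whose mean is at most `t`, gives `c t ≤ ∑ (x i / N) c i`.
-/

open Finset fwdDiff

theorem Nat.choose_mul_choose_sub_comm (n i r : ℕ) :
    n.choose i * (n - i).choose r = n.choose r * (n - r).choose i := by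
  have hi := Nat.choose_mul (n := n) (Nat.le_add_right i r)
  have hr := Nat.choose_mul (n := n) (Nat.le_add_left r i)
  rw [Nat.add_sub_cancel_left, Nat.choose_symm_add] at hi
  rw [Nat.add_sub_cancel] at hr
  exact hi.symm.trans hr

theorem sum_mul_choose_sub_div_choose (n i : ℕ) (a : ℕ → ℝ) :
    (∑ r ∈ Icc 1 (n - i), a r * (n - r).choose i) / n.choose i =
      ∑ r ∈ Icc 1 n, a r / n.choose r * (n - i).choose r := by
  rcases le_or_gt i n with hi | hi
  · rw [sum_div]
    refine sum_subset_zero_on_sdiff (Icc_subset_Icc_right (Nat.sub_le n i)) ?_ ?_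
    · intro r hr
      simp only [mem_sdiff, mem_Icc] at hr
      simp [Nat.choose_eq_zero_of_lt (by omega : n - i < r)]
    · intro r hr
      have hr : r ≤ n := by simp only [mem_Icc] at hr; omega
      have hni : (n.choose i : ℝ) ≠ 0 := by exact_mod_cast (Nat.choose_pos hi).ne'
      have hnr : (n.choose r : ℝ) ≠ 0 := by exact_mod_cast (Nat.choose_pos hr).ne'
      have h := congrArg (Nat.cast (R := ℝ)) (Nat.choose_mul_choose_sub_comm n i r)
      push_cast at h
      rw [div_mul_eq_mul_div, div_eq_div_iff hni hnr]
      linear_combination (-a r) * h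
  · rw [Nat.choose_eq_zero_of_lt hi, Nat.cast_zero, div_zero, Nat.sub_eq_zero_of_le hi.le]
    refine (sum_eq_zero fun r hr => ?_).symm
    simp [Nat.choose_eq_zero_of_lt (by simp only [mem_Icc] at hr; omega : 0 < r)]

theorem Nat.antitone_choose_sub (n k : ℕ) : Antitone fun i : ℕ => (n - i).choose k :=
  fun _ _ h => Nat.choose_le_choose k (Nat.sub_le_sub_left h n)

theorem monotone_fwdDiff_choose_sub (n k : ℕ) :
    Monotone (Δ_[1] fun i : ℕ => ((n - i).choose k : ℝ)) := by
  refine monotone_nat_of_le_succ fun i => ?_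
  simp only [fwdDiff]
  rcases le_or_gt n (i + 1) with h | h
  · rw [Nat.sub_eq_zero_of_le h, Nat.sub_eq_zero_of_le (by omega : n ≤ i + 1 + 1)]
    have h0 : ((0 : ℕ).choose k : ℝ) ≤ (n - i).choose k := by
      exact_mod_cast Nat.choose_le_choose k (Nat.zero_le _)
    linarith
  · obtain ⟨j, rfl⟩ : ∃ j, n = j + 2 + i := ⟨n - (i + 2), by omega⟩
    rw [show j + 2 + i - i = j + 2 by omega, show j + 2 + i - (i + 1) = j + 1 by omega,
      show j + 2 + i - (i + 1 + 1) = j by omega]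
    cases k with
    | zero => simp
    | succ k =>
      -- Pascal's rule reduces the second difference to `C(j+1, k) - C(j, k) ≥ 0`.
      have hj : (j.choose k : ℝ) ≤ (j + 1).choose k := by
        exact_mod_cast Nat.choose_le_choose k j.le_succ
      simp only [Nat.choose_succ_succ', Nat.cast_add]
      linarith

theorem monotone_fwdDiff_sum_mul {ι : Type*} (s : Finset ι) {w : ι → ℝ} (hw : ∀ r ∈ s, 0 ≤ w r)
    {f : ι → ℕ → ℝ} (hf : ∀ r ∈ s, Monotone (Δ_[1] (f r))) :
    Monotone (Δ_[1] fun i => ∑ r ∈ s, w r * f r i) := by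
  intro a b hab
  simp only [fwdDiff, ← sum_sub_distrib, ← mul_sub]
  exact sum_le_sum fun r hr => mul_le_mul_of_nonneg_left (hf r hr hab) (hw r hr)

theorem add_mul_fwdDiff_le_of_monotone {f : ℕ → ℝ} (hf : Monotone (Δ_[1] f)) (t i : ℕ) :
    f t + ((i : ℝ) - t) * Δ_[1] f t ≤ f i := by
  have hstep : ∀ k, f (k + 1) = f k + Δ_[1] f k := fun k => by simp [fwdDiff]
  rcases le_total t i with hti | hit
  · induction i, hti using Nat.le_induction with
    | base => simp
    | succ k htk ih =>
      have := hf htk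
      rw [hstep k]
      push_cast
      linarith
  · induction hit using Nat.decreasingInduction with
    | self => simp
    | of_succ k hkt ih =>
      have := hf hkt.le
      rw [hstep k] at ih
      push_cast at ih
      linarith

theorem le_sum_mul_of_monotone_fwdDiff {f : ℕ → ℝ} (hf : Monotone (Δ_[1] f)) {t : ℕ}
    (ht : Δ_[1] f t ≤ 0) (s : Finset ℕ) {p : ℕ → ℝ} (hp : ∀ i ∈ s, 0 ≤ p i)
    (hp1 : ∑ i ∈ s, p i = 1) (hmean : ∑ i ∈ s, (i : ℝ) * p i ≤ t) :
    f t ≤ ∑ i ∈ s, p i * f i :=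
  calc f t ≤ f t + ((∑ i ∈ s, (i : ℝ) * p i) - t) * Δ_[1] f t :=
        le_add_of_nonneg_right (mul_nonneg_of_nonpos_of_nonpos (sub_nonpos.mpr hmean) ht)
    _ = ∑ i ∈ s, p i * (f t + ((i : ℝ) - t) * Δ_[1] f t) := by
        set d := Δ_[1] f t
        rw [sum_congr rfl fun i _ => show p i * (f t + ((i : ℝ) - t) * d) =
          f t * p i + d * (i * p i) - d * t * p i by ring, sum_sub_distrib, sum_add_distrib,
          ← mul_sum, ← mul_sum, ← mul_sum, hp1]
        ring
    _ ≤ ∑ i ∈ s, p i * f i :=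
        sum_le_sum fun i hi => mul_le_mul_of_nonneg_left
          (add_mul_fwdDiff_le_of_monotone hf t i) (hp i hi)

theorem converse_endpoint_general (Λ N : ℕ) (hN : 1 ≤ N)
    (t : ℕ) (L : ℕ → ℕ)
    (c : ℕ → ℝ)
    (hc : ∀ i, c i =
      (∑ r ∈ Finset.Icc 1 (Λ - i), (L r : ℝ) * (Nat.choose (Λ - r) i : ℝ)) /
        (Nat.choose Λ i : ℝ))
    (x : ℕ → ℝ) (hx : ∀ i, i ≤ Λ → 0 ≤ x i)
    (hxsum : ∑ i ∈ Finset.range (Λ + 1), x i = (N : ℝ))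
    (hcache : ∑ i ∈ Finset.range (Λ + 1), (i : ℝ) * x i ≤ (t : ℝ) * N) :
    c t = (∑ r ∈ Finset.Icc 1 (Λ - t), (L r : ℝ) * (Nat.choose (Λ - r) t : ℝ)) /
        (Nat.choose Λ t : ℝ) ∧
    (∑ r ∈ Finset.Icc 1 (Λ - t), (L r : ℝ) * (Nat.choose (Λ - r) t : ℝ)) /
        (Nat.choose Λ t : ℝ) ≤
      ∑ i ∈ Finset.range (Λ + 1), (x i / (N : ℝ)) * c i := by
  refine ⟨hc t, ?_⟩
  have hcoeff : c = fun i => ∑ r ∈ Icc 1 Λ, (L r : ℝ) / Λ.choose r * (Λ - i).choose r :=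
    funext fun i => (hc i).trans (sum_mul_choose_sub_div_choose Λ i _)
  have hN0 : (0 : ℝ) < N := by exact_mod_cast hN
  rw [← hc t]
  refine le_sum_mul_of_monotone_fwdDiff (p := fun i => x i / N) ?convex ?decreasing _ ?nonneg
    ?total ?mean
  case convex =>
    rw [hcoeff]
    exact monotone_fwdDiff_sum_mul _ (fun r _ => by positivity)
      fun r _ => monotone_fwdDiff_choose_sub Λ r
  case decreasing =>
    simp only [hcoeff, fwdDiff, ← sum_sub_distrib, ← mul_sub]
    refine sum_nonpos fun r _ => mul_nonpos_of_nonneg_of_nonpos (by positivity) ?_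
    exact sub_nonpos.mpr (by exact_mod_cast Nat.antitone_choose_sub Λ r t.le_succ)
  case nonneg => exact fun i hi => div_nonneg (hx i (by simpa [Nat.lt_succ_iff] using hi)) hN0.le
  case total => rw [← sum_div, hxsum, div_self hN0.ne']
  case mean =>
    simp only [mul_div_assoc', ← sum_div]
    exact (div_le_iff₀ hN0).mpr hcache

/-- Endpoint of the converse at integer points `t = Λγ`: for a non-increasing
profile `L` with `Σ L_r = K` and coefficients
`c i = (Σ_{r=1}^{Λ−i} L r · C(Λ−r, i)) / C(Λ, i)`, any admissible placement
`x_0,…,x_Λ ≥ 0` with `Σ x_i = N` and `Σ i·x_i ≤ t·N` satisfies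
`Σ (x_i/N)·c_i ≥ c_t = (Σ_{r=1}^{Λ−t} L r · C(Λ−r, t)) / C(Λ, t)`. -/
theorem converse_endpoint (Λ K N : ℕ) (hΛ : 1 ≤ Λ) (hK : 1 ≤ K) (hN : 1 ≤ N)
    (t : ℕ) (ht : t ≤ Λ) (L : ℕ → ℕ)
    (hmono : ∀ a b, 1 ≤ a → a ≤ b → b ≤ Λ → L b ≤ L a)
    (hsum : ∑ r ∈ Finset.Icc 1 Λ, L r = K)
    (c : ℕ → ℝ)
    (hc : ∀ i, c i =
      (∑ r ∈ Finset.Icc 1 (Λ - i), (L r : ℝ) * (Nat.choose (Λ - r) i : ℝ)) /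
        (Nat.choose Λ i : ℝ))
    (x : ℕ → ℝ) (hx : ∀ i, i ≤ Λ → 0 ≤ x i)
    (hxsum : ∑ i ∈ Finset.range (Λ + 1), x i = (N : ℝ))
    (hcache : ∑ i ∈ Finset.range (Λ + 1), (i : ℝ) * x i ≤ (t : ℝ) * N) :
    c t = (∑ r ∈ Finset.Icc 1 (Λ - t), (L r : ℝ) * (Nat.choose (Λ - r) t : ℝ)) /
        (Nat.choose Λ t : ℝ) ∧
    (∑ r ∈ Finset.Icc 1 (Λ - t), (L r : ℝ) * (Nat.choose (Λ - r) t : ℝ)) /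
        (Nat.choose Λ t : ℝ) ≤
      ∑ i ∈ Finset.range (Λ + 1), (x i / (N : ℝ)) * c i :=
  converse_endpoint_general Λ N hN t L c hc x hx hxsum hcache
end

section
/- Let Λ ≥ 1, let t ∈ {0,…,Λ}, and let L : {1,…,Λ} → ℕ be non-increasing (L_1 ≥ … ≥ L_Λ) with Σ_{r=1}^{Λ} L_r = K. Then ( Σ_{r=1}^{Λ−t} L_r · C(Λ−r, t) ) / C(Λ, t) ≥ K·(Λ−t) / ( Λ·(t+1) ), i.e., the delay expression for any profile L is at least the value K(1−γ)/(Λγ+1) attained by the uniform profile, where γ = t/Λ. -/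
open Finset

/-!
Both the profile `r ↦ L r` and the weights `r ↦ C(Λ - r, t)` are non-increasing in `r`, so
Chebyshev's sum inequality gives `K · Σ_r C(Λ - r, t) ≤ Λ · Σ_r L r · C(Λ - r, t)`. By the
hockey-stick identity `Σ_{r=1}^{Λ} C(Λ - r, t) = C(Λ, t + 1)`, and
`C(Λ, t + 1) (t + 1) = C(Λ, t) (Λ - t)` turns this into the claimed bound.
-/

namespace Nat

theorem sum_range_choose_eq_choose_succ (n t : ℕ) :
    ∑ m ∈ range n, m.choose t = n.choose (t + 1) := by
  induction n with
  | zero => simp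
  | succ n ih => rw [sum_range_succ, ih, choose_succ_succ', add_comm]

theorem sum_Icc_choose_sub (n t : ℕ) :
    ∑ r ∈ Icc 1 n, (n - r).choose t = n.choose (t + 1) := by
  rw [← Ico_add_one_right_eq_Icc, sum_Ico_eq_sum_range, add_tsub_cancel_right,
    ← sum_range_choose_eq_choose_succ, ← sum_range_reflect (fun m => m.choose t)]
  simp only [Nat.sub_sub]

theorem antitone_choose_sub_s9 (n t : ℕ) : Antitone fun r => (n - r).choose t :=
  fun _ _ h => choose_le_choose t (Nat.sub_le_sub_left h n)

theorem cast_choose_succ_mul {R : Type*} [CommRing R] {n t : ℕ} (ht : t ≤ n) :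
    (n.choose (t + 1) : R) * (t + 1) = n.choose t * (n - t) := by
  simpa [Nat.cast_sub ht] using congrArg (Nat.cast : ℕ → R) (choose_succ_right_eq n t)

theorem sum_mul_choose_succ_le_mul_sum (n t : ℕ) {L : ℕ → ℕ} (hL : AntitoneOn L (Icc 1 n)) :
    (∑ r ∈ Icc 1 n, L r) * n.choose (t + 1) ≤ n * ∑ r ∈ Icc 1 n, L r * (n - r).choose t := by
  have := (hL.monovaryOn ((antitone_choose_sub_s9 n t).antitoneOn _)).sum_mul_sum_le_card_mul_sum
  rwa [sum_Icc_choose_sub, card_Icc, add_tsub_cancel_right] at this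

end Nat

theorem sum_Icc_sub_mul_choose_sub_eq_sum_Icc {R : Type*} [Semiring R] (n t : ℕ)
    (f : ℕ → R) :
    ∑ r ∈ Icc 1 (n - t), f r * ((n - r).choose t : R) =
      ∑ r ∈ Icc 1 n, f r * ((n - r).choose t : R) := by
  refine sum_subset (Icc_subset_Icc_right (Nat.sub_le n t)) fun r hr hr' => ?_
  simp only [mem_Icc, not_and, not_le] at hr hr'
  rw [Nat.choose_eq_zero_of_lt (by omega), Nat.cast_zero, mul_zero]

/-- Corollary 1 (uniform profile is optimal): for any non-increasing profile `L`
with `Σ_{r=1}^{Λ} L r = K` and any `t ∈ {0,…,Λ}`,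
`(Σ_{r=1}^{Λ−t} L r · C(Λ−r, t)) / C(Λ, t) ≥ K·(Λ−t)/(Λ·(t+1))`,
i.e. the delay of any profile is at least the uniform-profile delay
`K(1−γ)/(Λγ+1)` with `γ = t/Λ`. -/
theorem uniform_profile_minimizes (Λ K t : ℕ) (hΛ : 1 ≤ Λ) (ht : t ≤ Λ)
    (L : ℕ → ℕ)
    (hmono : ∀ a b, 1 ≤ a → a ≤ b → b ≤ Λ → L b ≤ L a)
    (hsum : ∑ r ∈ Finset.Icc 1 Λ, L r = K) :
    (K : ℚ) * ((Λ : ℚ) - (t : ℚ)) / ((Λ : ℚ) * ((t : ℚ) + 1)) ≤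
      (∑ r ∈ Finset.Icc 1 (Λ - t), (L r : ℚ) * (Nat.choose (Λ - r) t : ℚ)) /
        (Nat.choose Λ t : ℚ) := by
  set S := ∑ r ∈ Icc 1 Λ, (L r : ℚ) * (Λ - r).choose t with hS
  have hL : AntitoneOn L (Icc 1 Λ) := fun a ha b hb hab => by
    simp only [coe_Icc, Set.mem_Icc] at ha hb
    exact hmono a b ha.1 hab hb.2
  have hcheb : (K : ℚ) * Λ.choose (t + 1) ≤ Λ * S := by
    rw [← hsum, hS]
    exact_mod_cast Nat.sum_mul_choose_succ_le_mul_sum Λ t hL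
  have hΛ0 : (Λ : ℚ) ≠ 0 := Nat.cast_ne_zero.mpr (by omega)
  have hC0 : (Λ.choose t : ℚ) ≠ 0 := by exact_mod_cast (Nat.choose_pos ht).ne'
  calc (K : ℚ) * (Λ - t) / (Λ * (t + 1))
      = K * Λ.choose (t + 1) / (Λ * Λ.choose t) := by
        rw [div_eq_div_iff (mul_ne_zero hΛ0 (by positivity)) (mul_ne_zero hΛ0 hC0)]
        linear_combination (-(K * Λ : ℚ)) * Nat.cast_choose_succ_mul (R := ℚ) ht
    _ ≤ Λ * S / (Λ * Λ.choose t) := by gcongr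
    _ = _ := by rw [mul_div_mul_left _ _ hΛ0, sum_Icc_sub_mul_choose_sub_eq_sum_Icc]
end

section
/- Let Λ ≥ 1 and t ∈ {0,…,Λ}. Let L, L' : {1,…,Λ} → ℕ both be non-increasing with the same total sum Σ_{r=1}^{Λ} L_r = Σ_{r=1}^{Λ} L'_r = K, and suppose L majorizes L', i.e., Σ_{r=1}^{m} L_r ≥ Σ_{r=1}^{m} L'_r for every m ∈ {1,…,Λ}. Then Σ_{r=1}^{Λ−t} L_r · C(Λ−r, t) ≥ Σ_{r=1}^{Λ−t} L'_r · C(Λ−r, t); consequently the delay expression (Σ_{r=1}^{Λ−t} L_r C(Λ−r,t))/C(Λ,t) is at least that of L'. -/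
/-! Abel's inequality: the weights `C(Λ − r, t)` are non-negative and non-increasing in `r`,
so a weighted sum against them is a non-negative combination of partial sums, and
majorization compares partial sums. -/

open Finset

section PartialSums

variable {R : Type*} [Ring R] [LinearOrder R] [IsOrderedRing R]

lemma sum_Icc_mul_nonneg_of_partialSums_nonneg {d w : ℕ → R} {N : ℕ}
    (hw : AntitoneOn w (Icc 1 N)) (hwN : 0 ≤ w N)
    (hd : ∀ m ∈ Icc 1 N, 0 ≤ ∑ r ∈ Icc 1 m, d r) :
    0 ≤ ∑ r ∈ Icc 1 N, d r * w r := by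
  -- Step `n → n + 1` only lowers the left side: `D n ≥ 0` gets the smaller weight `w (n + 1)`.
  have partialSum_mul_le : ∀ n ≤ N, (∑ r ∈ Icc 1 n, d r) * w n ≤ ∑ r ∈ Icc 1 n, d r * w r := by
    intro n
    induction n with
    | zero => simp
    | succ n ih =>
      intro hn
      rw [sum_Icc_succ_top (by omega), sum_Icc_succ_top (by omega), add_mul]
      gcongr
      rcases Nat.eq_zero_or_pos n with rfl | hpos
      · simp
      calc (∑ r ∈ Icc 1 n, d r) * w (n + 1)
          ≤ (∑ r ∈ Icc 1 n, d r) * w n :=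
            mul_le_mul_of_nonneg_left
              (hw (mem_Icc.2 ⟨hpos, by omega⟩) (mem_Icc.2 ⟨by omega, hn⟩) n.le_succ)
              (hd n (mem_Icc.2 ⟨hpos, by omega⟩))
        _ ≤ ∑ r ∈ Icc 1 n, d r * w r := ih (by omega)
  rcases Nat.eq_zero_or_pos N with rfl | hN
  · simp
  exact (mul_nonneg (hd N (mem_Icc.2 ⟨hN, le_rfl⟩)) hwN).trans (partialSum_mul_le N le_rfl)

lemma sum_Icc_mul_le_sum_mul_of_partialSums_le {a b w : ℕ → R} {N : ℕ}
    (hw : AntitoneOn w (Icc 1 N)) (hwN : 0 ≤ w N)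
    (hab : ∀ m ∈ Icc 1 N, ∑ r ∈ Icc 1 m, b r ≤ ∑ r ∈ Icc 1 m, a r) :
    ∑ r ∈ Icc 1 N, b r * w r ≤ ∑ r ∈ Icc 1 N, a r * w r := by
  have h := sum_Icc_mul_nonneg_of_partialSums_nonneg (d := a - b) hw hwN fun m hm => by
    simpa [sum_sub_distrib] using hab m hm
  simpa [sub_mul, sum_sub_distrib] using h

end PartialSums

lemma antitone_choose_sub (Λ t : ℕ) : Antitone fun r => Nat.choose (Λ - r) t :=
  fun _ _ h => Nat.choose_le_choose t (Nat.sub_le_sub_left h Λ)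

theorem majorization_increases_delay_general (Λ t : ℕ)
    (L L' : ℕ → ℕ)
    (hmaj : ∀ m ∈ Finset.Icc 1 Λ,
      ∑ r ∈ Finset.Icc 1 m, L' r ≤ ∑ r ∈ Finset.Icc 1 m, L r) :
    (∑ r ∈ Finset.Icc 1 (Λ - t), L' r * Nat.choose (Λ - r) t ≤
        ∑ r ∈ Finset.Icc 1 (Λ - t), L r * Nat.choose (Λ - r) t) ∧
    ((∑ r ∈ Finset.Icc 1 (Λ - t), (L' r : ℚ) * (Nat.choose (Λ - r) t : ℚ)) /
        (Nat.choose Λ t : ℚ) ≤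
      (∑ r ∈ Finset.Icc 1 (Λ - t), (L r : ℚ) * (Nat.choose (Λ - r) t : ℚ)) /
        (Nat.choose Λ t : ℚ)) := by
  have hweights : AntitoneOn (fun r => (Nat.choose (Λ - r) t : ℚ)) (Icc 1 (Λ - t)) :=
    (Nat.mono_cast.comp_antitone (antitone_choose_sub Λ t)).antitoneOn _
  have hmaj' : ∀ m ∈ Icc 1 (Λ - t),
      ∑ r ∈ Icc 1 m, (L' r : ℚ) ≤ ∑ r ∈ Icc 1 m, (L r : ℚ) := fun m hm => by
    exact_mod_cast hmaj m (mem_Icc.2 ⟨(mem_Icc.1 hm).1, (mem_Icc.1 hm).2.trans (Nat.sub_le _ _)⟩)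
  have hq := sum_Icc_mul_le_sum_mul_of_partialSums_le hweights (Nat.cast_nonneg _) hmaj'
  exact ⟨by exact_mod_cast hq, div_le_div_of_nonneg_right hq (Nat.cast_nonneg _)⟩

/-- Skewness increases delay: if the non-increasing profiles `L` and `L'` have the
same total `K` and `L` majorizes `L'` (partial sums dominate), then
`Σ_{r=1}^{Λ−t} L r · C(Λ−r, t) ≥ Σ_{r=1}^{Λ−t} L' r · C(Λ−r, t)`, and consequently
the delay expression of `L` is at least that of `L'`. -/
theorem majorization_increases_delay (Λ t K : ℕ) (hΛ : 1 ≤ Λ) (ht : t ≤ Λ)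
    (L L' : ℕ → ℕ)
    (hmono : ∀ a b, 1 ≤ a → a ≤ b → b ≤ Λ → L b ≤ L a)
    (hmono' : ∀ a b, 1 ≤ a → a ≤ b → b ≤ Λ → L' b ≤ L' a)
    (hsum : ∑ r ∈ Finset.Icc 1 Λ, L r = K)
    (hsum' : ∑ r ∈ Finset.Icc 1 Λ, L' r = K)
    (hmaj : ∀ m ∈ Finset.Icc 1 Λ,
      ∑ r ∈ Finset.Icc 1 m, L' r ≤ ∑ r ∈ Finset.Icc 1 m, L r) :
    (∑ r ∈ Finset.Icc 1 (Λ - t), L' r * Nat.choose (Λ - r) t ≤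
        ∑ r ∈ Finset.Icc 1 (Λ - t), L r * Nat.choose (Λ - r) t) ∧
    ((∑ r ∈ Finset.Icc 1 (Λ - t), (L' r : ℚ) * (Nat.choose (Λ - r) t : ℚ)) /
        (Nat.choose Λ t : ℚ) ≤
      (∑ r ∈ Finset.Icc 1 (Λ - t), (L r : ℚ) * (Nat.choose (Λ - r) t : ℚ)) /
        (Nat.choose Λ t : ℚ)) :=
  majorization_increases_delay_general Λ t L L' hmaj
end

section
/- Let Λ ≥ 1, let t ∈ {0,…,Λ}, and let L : {1,…,Λ} → ℕ be non-increasing with Σ_{r=1}^{Λ} L_r = K. Then ( Σ_{r=1}^{Λ−t} L_r · C(Λ−r, t) ) / C(Λ, t) ≤ K·(Λ−t)/Λ, with equality when L_1 = K and L_r = 0 for r ≥ 2. Equivalently, with γ = t/Λ, the delay expression never exceeds K(1−γ), the value achieved when all K users share a single cache. -/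
open Finset

/- Every weight `C(Λ - r, t)` is at most `C(Λ - 1, t)`, so the delay is at most
`K · C(Λ - 1, t) / C(Λ, t) = K (Λ - t) / Λ`, and the fully skewed profile puts all `K` users
on the single weight `C(Λ - 1, t)`. -/

theorem Nat.cast_choose_pred_div_choose {Λ t : ℕ} (hΛ : 1 ≤ Λ) (ht : t ≤ Λ) :
    ((Λ - 1).choose t : ℚ) / Λ.choose t = ((Λ : ℚ) - t) / Λ := by
  have hpos : (0 : ℚ) < Λ.choose t := by exact_mod_cast Nat.choose_pos ht
  have hΛ' : (0 : ℚ) < Λ := by exact_mod_cast hΛ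
  have h := Nat.choose_mul_succ_eq (Λ - 1) t
  rw [Nat.sub_add_cancel hΛ] at h
  have h' : ((Λ - 1).choose t : ℚ) * Λ = Λ.choose t * ((Λ : ℚ) - t) := by
    rw [← Nat.cast_sub ht]
    exact_mod_cast h
  rw [div_eq_div_iff hpos.ne' hΛ'.ne', h', mul_comm]

/-- Terms with `r > Λ - t` vanish because then `Λ - r < t`. -/
theorem sum_Icc_sub_mul_choose {R : Type*} [NonAssocSemiring R] (f : ℕ → R) (Λ t : ℕ) :
    ∑ r ∈ Icc 1 (Λ - t), f r * ((Λ - r).choose t : R) =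
      ∑ r ∈ Icc 1 Λ, f r * ((Λ - r).choose t : R) := by
  refine sum_subset (Icc_subset_Icc_right (Nat.sub_le Λ t)) fun r hr hr' => ?_
  simp only [mem_Icc, not_and, not_le] at hr hr'
  rw [Nat.choose_eq_zero_of_lt (by omega), Nat.cast_zero, mul_zero]

theorem sum_Icc_mul_choose_le {R : Type*} [Semiring R] [PartialOrder R] [IsOrderedRing R]
    (f : ℕ → R) (hf : ∀ r, 0 ≤ f r) (Λ t : ℕ) :
    ∑ r ∈ Icc 1 Λ, f r * ((Λ - r).choose t : R) ≤
      (∑ r ∈ Icc 1 Λ, f r) * ((Λ - 1).choose t : R) := by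
  rw [sum_mul]
  refine sum_le_sum fun r hr => mul_le_mul_of_nonneg_left ?_ (hf r)
  have hr : Λ - r ≤ Λ - 1 := by simp only [mem_Icc] at hr; omega
  exact Nat.mono_cast (Nat.choose_le_choose t hr)

theorem skewed_profile_maximizes_general (Λ t K : ℕ) (hΛ : 1 ≤ Λ) (ht : t ≤ Λ)
    (L : ℕ → ℕ)
    (hsum : ∑ r ∈ Finset.Icc 1 Λ, L r = K) :
    ((∑ r ∈ Finset.Icc 1 (Λ - t), (L r : ℚ) * (Nat.choose (Λ - r) t : ℚ)) /
        (Nat.choose Λ t : ℚ) ≤ (K : ℚ) * ((Λ : ℚ) - (t : ℚ)) / (Λ : ℚ)) ∧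
    ((L 1 = K ∧ ∀ r, 2 ≤ r → r ≤ Λ → L r = 0) →
      (∑ r ∈ Finset.Icc 1 (Λ - t), (L r : ℚ) * (Nat.choose (Λ - r) t : ℚ)) /
          (Nat.choose Λ t : ℚ) = (K : ℚ) * ((Λ : ℚ) - (t : ℚ)) / (Λ : ℚ)) := by
  have hskewed : (K : ℚ) * ((Λ : ℚ) - t) / Λ = K * ((Λ - 1).choose t : ℚ) / Λ.choose t := by
    rw [mul_div_assoc, mul_div_assoc, Nat.cast_choose_pred_div_choose hΛ ht]
  rw [sum_Icc_sub_mul_choose, hskewed]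
  constructor
  · have hK : (K : ℚ) = ∑ r ∈ Icc 1 Λ, (L r : ℚ) := by rw [← hsum, Nat.cast_sum]
    rw [hK]
    gcongr
    exact sum_Icc_mul_choose_le _ (fun r => Nat.cast_nonneg _) Λ t
  · rintro ⟨hL1, hL0⟩
    rw [sum_eq_single_of_mem 1 (mem_Icc.mpr ⟨le_rfl, hΛ⟩), hL1]
    intro r hr hr1
    rw [hL0 r (by simp only [mem_Icc] at hr; omega) (mem_Icc.mp hr).2, Nat.cast_zero, zero_mul]

/-- The fully skewed profile is the worst case: for any non-increasing profile `L`
with `Σ_{r=1}^{Λ} L r = K`,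
`(Σ_{r=1}^{Λ−t} L r · C(Λ−r, t)) / C(Λ, t) ≤ K·(Λ−t)/Λ`, with equality when
`L 1 = K` and `L r = 0` for `2 ≤ r ≤ Λ` (delay `K(1−γ)`, `γ = t/Λ`). -/
theorem skewed_profile_maximizes (Λ t K : ℕ) (hΛ : 1 ≤ Λ) (ht : t ≤ Λ)
    (L : ℕ → ℕ)
    (hmono : ∀ a b, 1 ≤ a → a ≤ b → b ≤ Λ → L b ≤ L a)
    (hsum : ∑ r ∈ Finset.Icc 1 Λ, L r = K) :
    ((∑ r ∈ Finset.Icc 1 (Λ - t), (L r : ℚ) * (Nat.choose (Λ - r) t : ℚ)) /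
        (Nat.choose Λ t : ℚ) ≤ (K : ℚ) * ((Λ : ℚ) - (t : ℚ)) / (Λ : ℚ)) ∧
    ((L 1 = K ∧ ∀ r, 2 ≤ r → r ≤ Λ → L r = 0) →
      (∑ r ∈ Finset.Icc 1 (Λ - t), (L r : ℚ) * (Nat.choose (Λ - r) t : ℚ)) /
          (Nat.choose Λ t : ℚ) = (K : ℚ) * ((Λ : ℚ) - (t : ℚ)) / (Λ : ℚ)) :=
  skewed_profile_maximizes_general Λ t K hΛ ht L hsum
end
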